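/- Let M^ω be the epistemic model with domain ℕ ⊎ ℕ' (two disjoint copies of ℕ, writing i' for elements of the second copy), where ∼_a is the reflexive-symmetric closure of {(2i, 2i+1) : i ∈ ℕ} ∪ {(2i', (2i+1)') : i ∈ ℕ}, ∼_b is the reflexive-symmetric closure of {(2i+1, 2i+2) : i ∈ ℕ} ∪ {((2i+1)', (2i+2)') : i ∈ ℕ} ∪ {(0, 0')}, and V(p) = {0, 0'}. Then for all restrictions M and N of M^ω, all states s of M and t of N, and all k ∈ ℕ: if M_s and N_t are k-bisimilar, then for every formula φ ∈ L_PAPAL of epistemic depth d(φ) ≤ k, M_s ⊨ φ if and only if N_t ⊨ φ. -/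

import Mathlib

/-!
Bisimilarity of depth `k + d` survives the announcement of a formula of depth `d` as bisimilarity
of depth `k`, so invariance follows by induction on formulas once every positive announcement on
one side can be answered by a positive announcement on the other. In `M^ω`, a positive formula
that holds at both ends of an edge between a `p`-state and a `¬p`-state holds everywhere, since
every state is back-simulated by the end that agrees with it on `p`; such an announcement is
answered by `⊤`. Otherwise no edge of the announced submodel joins a `p`-state to a `¬p`-state, and
answering with whichever of `p`, `¬p` holds at the current state leaves two parts that are closed
under the accessibility relations and have constant valuation, hence are bisimilar at every depth.
-/

/-- An epistemic (S5) model: a nonempty set of states, an equivalence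
relation for each agent, and a valuation of atoms. -/
structure EpiModel (A P : Type) where
  S : Type
  ne : Nonempty S
  rel : A → S → S → Prop
  equiv : ∀ a, Equivalence (rel a)
  val : P → Set S

/-- Positive formulas L_EL⁺ : p | ¬p | ∧ | ∨ | K_a. -/
inductive PosForm (A P : Type) where
  | atom : P → PosForm A P
  | natom : P → PosForm A P
  | and : PosForm A P → PosForm A P → PosForm A P
  | or : PosForm A P → PosForm A P → PosForm A P
  | know : A → PosForm A P → PosForm A P

/-- Satisfaction of a positive formula, relativized to a current domain `D`
(representing the submodel of `M` induced by `D`). -/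
def PosForm.sat {A P : Type} (M : EpiModel A P) : PosForm A P → Set M.S → M.S → Prop
  | .atom p, _, s => s ∈ M.val p
  | .natom p, _, s => s ∉ M.val p
  | .and φ ψ, D, s => PosForm.sat M φ D s ∧ PosForm.sat M ψ D s
  | .or φ ψ, D, s => PosForm.sat M φ D s ∨ PosForm.sat M ψ D s
  | .know a φ, D, s => ∀ t, M.rel a s t → t ∈ D → PosForm.sat M φ D t

/-- The language L_PAPAL : atoms, ¬, ∧, K_a, announcements [ψ]φ and the
positive arbitrary-announcement quantifier □⁺. -/
inductive Form (A P : Type) where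
  | atom : P → Form A P
  | neg : Form A P → Form A P
  | and : Form A P → Form A P → Form A P
  | know : A → Form A P → Form A P
  | ann : Form A P → Form A P → Form A P
  | pbox : Form A P → Form A P

/-- Satisfaction, relativized to a current domain `D`: `Form.sat M φ D s`
means that φ holds at state `s` of the restriction of `M` to `D`.
Announcement `[ψ]φ` further restricts the domain to the states of `D`
satisfying ψ; `□⁺φ` quantifies over announcements of positive formulas. -/
def Form.sat {A P : Type} (M : EpiModel A P) : Form A P → Set M.S → M.S → Prop
  | .atom p, _, s => s ∈ M.val p
  | .neg φ, D, s => ¬ Form.sat M φ D s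
  | .and φ ψ, D, s => Form.sat M φ D s ∧ Form.sat M ψ D s
  | .know a φ, D, s => ∀ t, M.rel a s t → t ∈ D → Form.sat M φ D t
  | .ann ψ φ, D, s => Form.sat M ψ D s → Form.sat M φ {t | t ∈ D ∧ Form.sat M ψ D t} s
  | .pbox φ, D, s => ∀ χ : PosForm A P, PosForm.sat M χ D s →
      Form.sat M φ {t | t ∈ D ∧ PosForm.sat M χ D t} s

/-- Truth at a pointed model `M_s`. -/
def Sat {A P : Type} (M : EpiModel A P) (s : M.S) (φ : Form A P) : Prop :=
  Form.sat M φ Set.univ s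

def Form.or {A P : Type} (φ ψ : Form A P) : Form A P := .neg (.and (.neg φ) (.neg ψ))
def Form.imp {A P : Type} (φ ψ : Form A P) : Form A P := Form.or (.neg φ) ψ
def Form.iff {A P : Type} (φ ψ : Form A P) : Form A P := .and (Form.imp φ ψ) (Form.imp ψ φ)
def Form.pdia {A P : Type} (φ : Form A P) : Form A P := .neg (.pbox (.neg φ))
def Form.lknow {A P : Type} (a : A) (φ : Form A P) : Form A P := .neg (.know a (.neg φ))

/-- Validity on the class S5 of all epistemic models. -/
def Valid (A P : Type) (φ : Form A P) : Prop :=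
  ∀ (M : EpiModel A P) (s : M.S), Sat M s φ

/-- Epistemic depth: counts nested knowledge operators (ignoring □⁺). -/
def Form.depth {A P : Type} : Form A P → ℕ
  | .atom _ => 0
  | .neg φ => Form.depth φ
  | .and φ ψ => max (Form.depth φ) (Form.depth ψ)
  | .know _ φ => Form.depth φ + 1
  | .ann φ ψ => Form.depth φ + Form.depth ψ
  | .pbox φ => Form.depth φ

/-- The restriction of a model to a nonempty subset of its domain. -/
def EpiModel.restrict {A P : Type} (M : EpiModel A P) (D : Set M.S)
    (h : D.Nonempty) : EpiModel A P where
  S := D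
  ne := ⟨⟨h.choose, h.choose_spec⟩⟩
  rel a s t := M.rel a s.1 t.1
  equiv a := ⟨fun s => (M.equiv a).refl s.1, fun h' => (M.equiv a).symm h',
    fun h1 h2 => (M.equiv a).trans h1 h2⟩
  val p := {s | s.1 ∈ M.val p}

/-- `IsNBisim M N n R`: `R` is an `n`-bisimulation between `M` and `N`. -/
def IsNBisim {A P : Type} (M N : EpiModel A P) : ℕ → (M.S → N.S → Prop) → Prop
  | 0, R => (∃ s t, R s t) ∧ ∀ s t, R s t → ∀ p, s ∈ M.val p ↔ t ∈ N.val p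
  | n+1, R => (∃ s t, R s t) ∧ ∀ s t, R s t →
      (∀ p, s ∈ M.val p ↔ t ∈ N.val p) ∧
      ∀ a, ∃ R' : M.S → N.S → Prop,
        (∀ u v, R u v → R' u v) ∧ IsNBisim M N n R' ∧
        (∀ s', M.rel a s s' → ∃ t', N.rel a t t' ∧ R' s' t') ∧
        (∀ t', N.rel a t t' → ∃ s', M.rel a s s' ∧ R' s' t')

/-- The epistemic model with domain ℕ ⊎ ℕ determined by relations `rel` and
valuation `V`. -/
abbrev doubleChainModel (A P : Type) (rel : A → (ℕ ⊕ ℕ) → (ℕ ⊕ ℕ) → Prop)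
    (hequiv : ∀ c, Equivalence (rel c)) (V : P → Set (ℕ ⊕ ℕ)) : EpiModel A P :=
  ⟨ℕ ⊕ ℕ, ⟨.inl 0⟩, rel, hequiv, V⟩

namespace EpiModel

variable {A P : Type} (M : EpiModel A P)

/-- `M.Bisim D₁ D₂ k u v`: the states `u` of the submodel induced by `D₁` and `v` of the submodel
induced by `D₂` are `k`-bisimilar. -/
def Bisim (D₁ D₂ : Set M.S) : ℕ → M.S → M.S → Prop
  | 0, u, v => u ∈ D₁ ∧ v ∈ D₂ ∧ ∀ q, u ∈ M.val q ↔ v ∈ M.val q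
  | k + 1, u, v => (u ∈ D₁ ∧ v ∈ D₂ ∧ ∀ q, u ∈ M.val q ↔ v ∈ M.val q) ∧ ∀ c,
      (∀ u', M.rel c u u' → u' ∈ D₁ → ∃ v', M.rel c v v' ∧ v' ∈ D₂ ∧ Bisim D₁ D₂ k u' v') ∧
      (∀ v', M.rel c v v' → v' ∈ D₂ → ∃ u', M.rel c u u' ∧ u' ∈ D₁ ∧ Bisim D₁ D₂ k u' v')

/-- Every announcement of a positive formula in one submodel can be answered by an announcement
of a positive formula in the other one without losing `k`-bisimilarity. -/
def PosAnnMatching : Prop :=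
  ∀ (k : ℕ) (D₁ D₂ : Set M.S) (u v : M.S) (χ : PosForm A P), M.Bisim D₁ D₂ k u v →
    χ.sat M D₂ v → ∃ χ' : PosForm A P, χ'.sat M D₁ u ∧
      M.Bisim {x | x ∈ D₁ ∧ χ'.sat M D₁ x} {y | y ∈ D₂ ∧ χ.sat M D₂ y} k u v

variable {M} {D₁ D₂ : Set M.S}

namespace Bisim

theorem bisim_zero {k : ℕ} {u v : M.S} (h : M.Bisim D₁ D₂ k u v) : M.Bisim D₁ D₂ 0 u v := by
  cases k with
  | zero => exact h
  | succ k => exact h.1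

theorem mono {k k' : ℕ} (hk : k' ≤ k) {u v : M.S} (h : M.Bisim D₁ D₂ k u v) :
    M.Bisim D₁ D₂ k' u v := by
  induction k' generalizing k u v with
  | zero => exact h.bisim_zero
  | succ k' ih =>
    obtain ⟨k, rfl⟩ : ∃ m, k = m + 1 := ⟨k - 1, by omega⟩
    refine ⟨h.1, fun c => ⟨fun u' hu' hu'D => ?_, fun v' hv' hv'D => ?_⟩⟩
    · obtain ⟨v', hv', hv'D, h'⟩ := (h.2 c).1 u' hu' hu'D
      exact ⟨v', hv', hv'D, ih (by omega) h'⟩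
    · obtain ⟨u', hu', hu'D, h'⟩ := (h.2 c).2 v' hv' hv'D
      exact ⟨u', hu', hu'D, ih (by omega) h'⟩

theorem symm {k : ℕ} {u v : M.S} (h : M.Bisim D₁ D₂ k u v) : M.Bisim D₂ D₁ k v u := by
  induction k generalizing u v with
  | zero => exact ⟨h.2.1, h.1, fun q => (h.2.2 q).symm⟩
  | succ k ih =>
    refine ⟨⟨h.1.2.1, h.1.1, fun q => (h.1.2.2 q).symm⟩, fun c => ⟨fun v' hv' hv'D => ?_,
      fun u' hu' hu'D => ?_⟩⟩
    · obtain ⟨u', hu', hu'D, h'⟩ := (h.2 c).2 v' hv' hv'D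
      exact ⟨u', hu', hu'D, ih h'⟩
    · obtain ⟨v', hv', hv'D, h'⟩ := (h.2 c).1 u' hu' hu'D
      exact ⟨v', hv', hv'D, ih h'⟩

theorem inter {E₁ E₂ : Set M.S} {d : ℕ}
    (hE : ∀ u v, M.Bisim D₁ D₂ d u v → (u ∈ E₁ ↔ v ∈ E₂)) (j : ℕ) {u v : M.S}
    (h : M.Bisim D₁ D₂ (j + d) u v) (hu : u ∈ E₁) (hv : v ∈ E₂) :
    M.Bisim (D₁ ∩ E₁) (D₂ ∩ E₂) j u v := by
  induction j generalizing u v with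
  | zero =>
    obtain ⟨huD, hvD, hval⟩ := h.bisim_zero
    exact ⟨⟨huD, hu⟩, ⟨hvD, hv⟩, hval⟩
  | succ j ih =>
    rw [show j + 1 + d = j + d + 1 by omega] at h
    refine ⟨⟨⟨h.1.1, hu⟩, ⟨h.1.2.1, hv⟩, h.1.2.2⟩, fun c => ⟨fun u' hu' hu'D => ?_,
      fun v' hv' hv'D => ?_⟩⟩
    · obtain ⟨v', hv', hv'D, h'⟩ := (h.2 c).1 u' hu' hu'D.1
      have hv'E := (hE u' v' (h'.mono (by omega))).1 hu'D.2
      exact ⟨v', hv', ⟨hv'D, hv'E⟩, ih h' hu'D.2 hv'E⟩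
    · obtain ⟨u', hu', hu'D, h'⟩ := (h.2 c).2 v' hv' hv'D.1
      have hu'E := (hE u' v' (h'.mono (by omega))).2 hv'D.2
      exact ⟨u', hu', ⟨hu'D, hu'E⟩, ih h' hu'E hv'D.2⟩

end Bisim

theorem bisim_of_closed {F₁ F₂ : Set M.S} (hF₁ : F₁ ⊆ D₁) (hF₂ : F₂ ⊆ D₂)
    (hclosed₁ : ∀ c x x', x ∈ F₁ → M.rel c x x' → x' ∈ D₁ → x' ∈ F₁)
    (hclosed₂ : ∀ c y y', y ∈ F₂ → M.rel c y y' → y' ∈ D₂ → y' ∈ F₂)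
    (hval : ∀ x ∈ F₁, ∀ y ∈ F₂, ∀ q, x ∈ M.val q ↔ y ∈ M.val q) (k : ℕ) {u v : M.S}
    (hu : u ∈ F₁) (hv : v ∈ F₂) : M.Bisim D₁ D₂ k u v := by
  induction k generalizing u v with
  | zero => exact ⟨hF₁ hu, hF₂ hv, hval u hu v hv⟩
  | succ k ih =>
    refine ⟨⟨hF₁ hu, hF₂ hv, hval u hu v hv⟩, fun c => ⟨fun u' hu' hu'D => ?_,
      fun v' hv' hv'D => ?_⟩⟩
    · exact ⟨v, (M.equiv c).refl v, hF₂ hv, ih (hclosed₁ c u u' hu hu' hu'D) hv⟩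
    · exact ⟨u, (M.equiv c).refl u, hF₁ hu, ih hu (hclosed₂ c v v' hv hv' hv'D)⟩

end EpiModel

open EpiModel

theorem PosForm.sat_of_back {A P : Type} {M N : EpiModel A P} {D : Set M.S} {D' : Set N.S}
    (Z : M.S → N.S → Prop) (hval : ∀ x y, Z x y → ∀ q, x ∈ M.val q ↔ y ∈ N.val q)
    (hback : ∀ x y, Z x y → ∀ c y', N.rel c y y' → y' ∈ D' →
      ∃ x', M.rel c x x' ∧ x' ∈ D ∧ Z x' y')
    (χ : PosForm A P) {x : M.S} {y : N.S} (hZ : Z x y) (hx : χ.sat M D x) : χ.sat N D' y := by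
  induction χ generalizing x y with
  | atom q => exact (hval x y hZ q).1 hx
  | natom q => exact fun hy => hx ((hval x y hZ q).2 hy)
  | and χ₁ χ₂ ih₁ ih₂ => exact ⟨ih₁ hZ hx.1, ih₂ hZ hx.2⟩
  | or χ₁ χ₂ ih₁ ih₂ => exact hx.imp (ih₁ hZ) (ih₂ hZ)
  | know c χ ih =>
    intro y' hy' hy'D
    obtain ⟨x', hx', hx'D, hZ'⟩ := hback x y hZ c y' hy' hy'D
    exact ih hZ' (hx x' hx' hx'D)

theorem Form.sat_iff_of_bisim {A P : Type} {M : EpiModel A P} (hM : M.PosAnnMatching)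
    (φ : Form A P) {k : ℕ} {D₁ D₂ : Set M.S} {u v : M.S} (h : M.Bisim D₁ D₂ k u v)
    (hd : φ.depth ≤ k) : φ.sat M D₁ u ↔ φ.sat M D₂ v := by
  induction φ generalizing k D₁ D₂ u v with
  | atom q => exact h.bisim_zero.2.2 q
  | neg ψ ih => exact not_congr (ih h hd)
  | and ψ ξ ih₁ ih₂ =>
    rw [Form.depth, max_le_iff] at hd
    exact and_congr (ih₁ h hd.1) (ih₂ h hd.2)
  | know c ψ ih =>
    obtain ⟨k, rfl⟩ : ∃ m, k = m + 1 := ⟨k - 1, by rw [Form.depth] at hd; omega⟩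
    have hψ : ψ.depth ≤ k := by rw [Form.depth] at hd; omega
    refine ⟨fun hu v' hv' hv'D => ?_, fun hv u' hu' hu'D => ?_⟩
    · obtain ⟨u', hu', hu'D, h'⟩ := (h.2 c).2 v' hv' hv'D
      exact (ih h' hψ).1 (hu u' hu' hu'D)
    · obtain ⟨v', hv', hv'D, h'⟩ := (h.2 c).1 u' hu' hu'D
      exact (ih h' hψ).2 (hv v' hv' hv'D)
  | ann ψ ξ ih₁ ih₂ =>
    rw [Form.depth] at hd
    have hψ := ih₁ h (by omega)
    have hann := fun hu hv => Bisim.inter (fun u v h => ih₁ h le_rfl) ξ.depth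
      (h.mono (by omega)) hu hv
    exact ⟨fun hu hv => (ih₂ (hann (hψ.2 hv) hv) le_rfl).1 (hu (hψ.2 hv)),
      fun hv hu => (ih₂ (hann hu (hψ.1 hu)) le_rfl).2 (hv (hψ.1 hu))⟩
  | pbox ψ ih =>
    rw [Form.depth] at hd
    refine ⟨fun hu χ hχ => ?_, fun hv χ hχ => ?_⟩
    · obtain ⟨χ', hχ', h'⟩ := hM k D₁ D₂ u v χ h hχ
      exact (ih h' hd).1 (hu χ' hχ')
    · obtain ⟨χ', hχ', h'⟩ := hM k D₂ D₁ v u χ h.symm hχ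
      exact (ih h'.symm hd).2 (hv χ' hχ')

theorem Set.image_val_setOf_and {α : Type*} {D : Set α} (E : Set D) {f : D → Prop} {g : α → Prop}
    (hfg : ∀ t, f t ↔ g t) :
    Subtype.val '' {t | t ∈ E ∧ f t} = {x | x ∈ Subtype.val '' E ∧ g x} := by
  ext x
  constructor
  · rintro ⟨t, ⟨htE, ht⟩, rfl⟩
    exact ⟨⟨t, htE, rfl⟩, (hfg t).1 ht⟩
  · rintro ⟨⟨t, htE, rfl⟩, hx⟩
    exact ⟨t, ⟨htE, (hfg t).2 hx⟩, rfl⟩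

section Restrict

variable {A P : Type} {M : EpiModel A P} {D : Set M.S} {h : D.Nonempty}

theorem PosForm.sat_restrict (χ : PosForm A P) (E : Set D) (s : D) :
    χ.sat (M.restrict D h) E s ↔ χ.sat M (Subtype.val '' E) s := by
  induction χ generalizing s with
  | atom q | natom q => rfl
  | and χ₁ χ₂ ih₁ ih₂ => exact and_congr (ih₁ s) (ih₂ s)
  | or χ₁ χ₂ ih₁ ih₂ => exact or_congr (ih₁ s) (ih₂ s)
  | know c χ ih =>
    refine ⟨fun hs x hx ⟨t, htE, htx⟩ => ?_, fun hs t ht htE => (ih t).2 (hs t.1 ht ⟨t, htE, rfl⟩)⟩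
    subst htx
    exact (ih t).1 (hs t hx htE)

theorem Form.sat_restrict (φ : Form A P) (E : Set D) (s : D) :
    φ.sat (M.restrict D h) E s ↔ φ.sat M (Subtype.val '' E) s := by
  induction φ generalizing E s with
  | atom q => rfl
  | neg ψ ih => exact not_congr (ih E s)
  | and ψ ξ ih₁ ih₂ => exact and_congr (ih₁ E s) (ih₂ E s)
  | know c ψ ih =>
    refine ⟨fun hs x hx ⟨t, htE, htx⟩ => ?_,
      fun hs t ht htE => (ih E t).2 (hs t.1 ht ⟨t, htE, rfl⟩)⟩
    subst htx
    exact (ih E t).1 (hs t hx htE)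
  | ann ψ ξ ih₁ ih₂ =>
    exact imp_congr (ih₁ E s) ((ih₂ _ s).trans
      (Iff.of_eq (congrArg (ξ.sat M · s) (Set.image_val_setOf_and E (ih₁ E)))))
  | pbox ψ ih =>
    exact forall_congr' fun χ => imp_congr (χ.sat_restrict E s) ((ih _ s).trans
      (Iff.of_eq (congrArg (ψ.sat M · s) (Set.image_val_setOf_and E (χ.sat_restrict E)))))

theorem sat_restrict_iff (φ : Form A P) (s : D) : Sat (M.restrict D h) s φ ↔ φ.sat M D s := by
  refine (φ.sat_restrict Set.univ s).trans ?_
  rw [Set.image_univ, Subtype.range_coe]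

theorem EpiModel.bisim_of_isNBisim {D₂ : Set M.S} {h₂ : D₂.Nonempty} {k : ℕ}
    {R : D → D₂ → Prop} (hR : IsNBisim (M.restrict D h) (M.restrict D₂ h₂) k R) {s : D} {t : D₂}
    (hst : R s t) : M.Bisim D D₂ k s t := by
  induction k generalizing R s t with
  | zero => exact ⟨s.2, t.2, hR.2 s t hst⟩
  | succ k ih =>
    obtain ⟨hval, hzig⟩ := hR.2 s t hst
    refine ⟨⟨s.2, t.2, hval⟩, fun c => ?_⟩
    obtain ⟨R', -, hR', hforth, hback⟩ := hzig c
    refine ⟨fun x hx hxD => ?_, fun y hy hyD => ?_⟩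
    · obtain ⟨t', ht', hR't'⟩ := hforth ⟨x, hxD⟩ hx
      exact ⟨t'.1, ht', t'.2, ih hR' hR't'⟩
    · obtain ⟨s', hs', hR's'⟩ := hback ⟨y, hyD⟩ hy
      exact ⟨s'.1, hs', s'.2, ih hR' hR's'⟩

end Restrict

namespace DoubleChain

def level : ℕ ⊕ ℕ → ℕ := Sum.elim id id

def up : ℕ ⊕ ℕ → ℕ ⊕ ℕ := Sum.map (· + 1) (· + 1)

@[simp] theorem level_inl (n : ℕ) : level (.inl n) = n := rfl

@[simp] theorem level_inr (n : ℕ) : level (.inr n) = n := rfl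

@[simp] theorem up_inl (n : ℕ) : up (.inl n) = .inl (n + 1) := rfl

@[simp] theorem up_inr (n : ℕ) : up (.inr n) = .inr (n + 1) := rfl

@[simp] theorem level_up (x : ℕ ⊕ ℕ) : level (up x) = level x + 1 := by cases x <;> rfl

end DoubleChain

open DoubleChain

/-- `M^ω` is the line `⋯ 1' 0' 0 1 ⋯`, in which the agents that see an edge depend only on its
level. -/
structure IsDoubleChain {A P : Type} (rel : A → ℕ ⊕ ℕ → ℕ ⊕ ℕ → Prop) (V : P → Set (ℕ ⊕ ℕ))
    (p : P) : Prop where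
  eq_or_adj {c : A} {x y : ℕ ⊕ ℕ} :
    rel c x y → x = y ∨ y = up x ∨ x = up y ∨ level x = 0 ∧ level y = 0
  rel_up_of_level_eq {c : A} {x z : ℕ ⊕ ℕ} : level x = level z → rel c x (up x) → rel c z (up z)
  mem_val_iff (x : ℕ ⊕ ℕ) : x ∈ V p ↔ level x = 0
  val_eq_empty {q : P} : q ≠ p → V q = ∅

namespace IsDoubleChain

variable {A P : Type} {a b : A} {rel : A → ℕ ⊕ ℕ → ℕ ⊕ ℕ → Prop}
  {hequiv : ∀ c, Equivalence (rel c)} {V : P → Set (ℕ ⊕ ℕ)} {p : P}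

local notation "𝕄" => doubleChainModel A P rel hequiv V

theorem rel_up_iff_mod_two_eq_zero (hrela : ∀ s t : ℕ ⊕ ℕ, rel a s t ↔ (s = t ∨ ∃ i : ℕ,
      (s = Sum.inl (2*i) ∧ t = Sum.inl (2*i+1)) ∨
      (t = Sum.inl (2*i) ∧ s = Sum.inl (2*i+1)) ∨
      (s = Sum.inr (2*i) ∧ t = Sum.inr (2*i+1)) ∨
      (t = Sum.inr (2*i) ∧ s = Sum.inr (2*i+1)))) (x : ℕ ⊕ ℕ) :
    rel a x (up x) ↔ level x % 2 = 0 := by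
  cases x with
  | inl n | inr n =>
    simp only [hrela, up_inl, up_inr, level_inl, level_inr, Sum.inl.injEq, Sum.inr.injEq,
      reduceCtorEq, Nat.left_eq_add, one_ne_zero, Nat.add_right_cancel_iff, and_self, or_self,
      or_false, false_or]
    exact ⟨fun ⟨i, hi⟩ => by omega, fun h => ⟨n / 2, by omega⟩⟩

theorem rel_up_iff_mod_two_eq_one (hrelb : ∀ s t : ℕ ⊕ ℕ, rel b s t ↔ (s = t ∨
      (s = Sum.inl 0 ∧ t = Sum.inr 0) ∨ (t = Sum.inl 0 ∧ s = Sum.inr 0) ∨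
      ∃ i : ℕ,
      (s = Sum.inl (2*i+1) ∧ t = Sum.inl (2*i+2)) ∨
      (t = Sum.inl (2*i+1) ∧ s = Sum.inl (2*i+2)) ∨
      (s = Sum.inr (2*i+1) ∧ t = Sum.inr (2*i+2)) ∨
      (t = Sum.inr (2*i+1) ∧ s = Sum.inr (2*i+2)))) (x : ℕ ⊕ ℕ) :
    rel b x (up x) ↔ level x % 2 = 1 := by
  cases x with
  | inl n | inr n =>
    simp only [hrelb, up_inl, up_inr, level_inl, level_inr, Sum.inl.injEq, Sum.inr.injEq,
      reduceCtorEq, Nat.left_eq_add, one_ne_zero, Nat.add_right_cancel_iff, Nat.add_eq_zero_iff,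
      and_self, and_false, false_and, or_self, or_false, false_or]
    exact ⟨fun ⟨i, hi⟩ => by omega, fun h => ⟨n / 2, by omega⟩⟩

theorem of_rel_iff (htwo : ∀ c : A, c = a ∨ c = b)
    (hrela : ∀ s t : ℕ ⊕ ℕ, rel a s t ↔ (s = t ∨ ∃ i : ℕ,
      (s = Sum.inl (2*i) ∧ t = Sum.inl (2*i+1)) ∨
      (t = Sum.inl (2*i) ∧ s = Sum.inl (2*i+1)) ∨
      (s = Sum.inr (2*i) ∧ t = Sum.inr (2*i+1)) ∨
      (t = Sum.inr (2*i) ∧ s = Sum.inr (2*i+1))))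
    (hrelb : ∀ s t : ℕ ⊕ ℕ, rel b s t ↔ (s = t ∨
      (s = Sum.inl 0 ∧ t = Sum.inr 0) ∨ (t = Sum.inl 0 ∧ s = Sum.inr 0) ∨
      ∃ i : ℕ,
      (s = Sum.inl (2*i+1) ∧ t = Sum.inl (2*i+2)) ∨
      (t = Sum.inl (2*i+1) ∧ s = Sum.inl (2*i+2)) ∨
      (s = Sum.inr (2*i+1) ∧ t = Sum.inr (2*i+2)) ∨
      (t = Sum.inr (2*i+1) ∧ s = Sum.inr (2*i+2))))
    (hVp : V p = {Sum.inl 0, Sum.inr 0}) (hVq : ∀ q : P, q ≠ p → V q = ∅) :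
    IsDoubleChain rel V p where
  eq_or_adj {c x y} h := by
    rcases htwo c with rfl | rfl
    · rcases (hrela x y).1 h with rfl | ⟨i, ⟨rfl, rfl⟩ | ⟨rfl, rfl⟩ | ⟨rfl, rfl⟩ | ⟨rfl, rfl⟩⟩ <;>
        simp
    · rcases (hrelb x y).1 h with rfl | ⟨rfl, rfl⟩ | ⟨rfl, rfl⟩ |
        ⟨i, ⟨rfl, rfl⟩ | ⟨rfl, rfl⟩ | ⟨rfl, rfl⟩ | ⟨rfl, rfl⟩⟩ <;> simp
  rel_up_of_level_eq {c x z} hxz := by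
    rcases htwo c with rfl | rfl
    · rw [rel_up_iff_mod_two_eq_zero hrela, rel_up_iff_mod_two_eq_zero hrela, hxz]
      exact id
    · rw [rel_up_iff_mod_two_eq_one hrelb, rel_up_iff_mod_two_eq_one hrelb, hxz]
      exact id
  mem_val_iff x := by
    rw [hVp]
    cases x <;> simp
  val_eq_empty := hVq _


theorem mem_val_iff_of_level_eq_zero_iff (hM : IsDoubleChain rel V p) {x y : ℕ ⊕ ℕ}
    (h : level x = 0 ↔ level y = 0) (q : P) : x ∈ V q ↔ y ∈ V q := by
  by_cases hq : q = p
  · rw [hq, hM.mem_val_iff, hM.mem_val_iff, h]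
  · simp only [hM.val_eq_empty hq, Set.mem_empty_iff_false]

theorem exists_posForm_sat_iff (hM : IsDoubleChain rel V p) (b : Prop) :
    ∃ χ : PosForm A P, ∀ D x, χ.sat 𝕄 D x ↔ (level x = 0 ↔ b) := by
  by_cases hb : b
  · exact ⟨.atom p, fun D x => (hM.mem_val_iff x).trans (iff_true_right hb).symm⟩
  · exact ⟨.natom p, fun D x => (not_congr (hM.mem_val_iff x)).trans (iff_false_right hb).symm⟩

theorem posForm_sat_of_sat_up (hM : IsDoubleChain rel V p) {χ : PosForm A P}
    {D : Set (ℕ ⊕ ℕ)} {w : ℕ ⊕ ℕ} (hw : level w = 0) (hwD : w ∈ D) (hupD : up w ∈ D)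
    (hχw : χ.sat 𝕄 D w) (hχup : χ.sat 𝕄 D (up w)) (y : ℕ ⊕ ℕ) : χ.sat 𝕄 D y := by
  let Z : ℕ ⊕ ℕ → ℕ ⊕ ℕ → Prop := fun x y => (x = w ∧ level y = 0) ∨ (x = up w ∧ level y ≠ 0)
  have hval : ∀ x y, Z x y → ∀ q, x ∈ V q ↔ y ∈ V q := by
    rintro x y (⟨rfl, hy⟩ | ⟨rfl, hy⟩) <;>
      exact hM.mem_val_iff_of_level_eq_zero_iff (by simp [hw, hy])
  have hback : ∀ x y, Z x y → ∀ c y', rel c y y' → y' ∈ D →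
      ∃ x', rel c x x' ∧ x' ∈ D ∧ Z x' y' := by
    rintro x y (⟨rfl, hy⟩ | ⟨rfl, hy⟩) c y' hyy' -
    · rcases hM.eq_or_adj hyy' with rfl | rfl | rfl | ⟨-, hy'⟩
      · exact ⟨x, (hequiv c).refl x, hwD, Or.inl ⟨rfl, hy⟩⟩
      · exact ⟨up x, hM.rel_up_of_level_eq (hy.trans hw.symm) hyy', hupD, Or.inr ⟨rfl, by simp⟩⟩
      · simp at hy
      · exact ⟨x, (hequiv c).refl x, hwD, Or.inl ⟨rfl, hy'⟩⟩
    · by_cases hy' : level y' = 0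
      · obtain rfl : y = up y' := by
          rcases hM.eq_or_adj hyy' with rfl | rfl | h | h
          · exact absurd hy' hy
          · simp at hy'
          · exact h
          · exact absurd h.1 hy
        have hdown := (hequiv c).symm
          (hM.rel_up_of_level_eq (hy'.trans hw.symm) ((hequiv c).symm hyy'))
        exact ⟨w, hdown, hwD, Or.inl ⟨rfl, hy'⟩⟩
      · exact ⟨up w, (hequiv c).refl _, hupD, Or.inr ⟨rfl, hy'⟩⟩
  by_cases hy : level y = 0
  · exact PosForm.sat_of_back Z hval hback χ (Or.inl ⟨rfl, hy⟩) hχw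
  · exact PosForm.sat_of_back Z hval hback χ (Or.inr ⟨rfl, hy⟩) hχup

theorem level_eq_zero_iff_of_rel (hM : IsDoubleChain rel V p) {E : Set (ℕ ⊕ ℕ)}
    (hE : ∀ w ∈ E, level w = 0 → up w ∉ E) {c : A} {y y' : ℕ ⊕ ℕ} (hy : y ∈ E) (hy' : y' ∈ E)
    (h : rel c y y') : level y = 0 ↔ level y' = 0 := by
  rcases hM.eq_or_adj h with rfl | rfl | rfl | ⟨h0, h0'⟩
  · rfl
  · simpa using fun h0 => hE y hy h0 hy'
  · simpa using fun h0 => hE y' hy' h0 hy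
  · exact iff_of_true h0 h0'

theorem posAnnMatching (hM : IsDoubleChain rel V p) : (𝕄).PosAnnMatching := by
  intro k D₁ D₂ u v χ huv hχv
  obtain ⟨huD, hvD, hval⟩ := huv.bisim_zero
  by_cases hfull : ∃ w, level w = 0 ∧ (w ∈ D₂ ∧ χ.sat 𝕄 D₂ w) ∧ (up w ∈ D₂ ∧ χ.sat 𝕄 D₂ (up w))
  · obtain ⟨w, hw, ⟨hwD, hχw⟩, hupD, hχup⟩ := hfull
    let top : PosForm A P := .or (.atom p) (.natom p)
    have h₁ : {x | x ∈ D₁ ∧ top.sat 𝕄 D₁ x} = D₁ := Set.sep_eq_self_iff_mem_true.2 fun x _ => em _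
    have h₂ : {y | y ∈ D₂ ∧ χ.sat 𝕄 D₂ y} = D₂ := Set.sep_eq_self_iff_mem_true.2
      fun y _ => hM.posForm_sat_of_sat_up hw hwD hupD hχw hχup y
    exact ⟨top, em _, by rwa [h₁, h₂]⟩
  · obtain ⟨χ', hχ'⟩ := hM.exists_posForm_sat_iff (level v = 0)
    have hu : level u = 0 ↔ level v = 0 := by rw [← hM.mem_val_iff, ← hM.mem_val_iff]; exact hval p
    refine ⟨χ', (hχ' D₁ u).2 hu, bisim_of_closed (F₂ := {y | (y ∈ D₂ ∧ χ.sat 𝕄 D₂ y) ∧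
      (level y = 0 ↔ level v = 0)}) subset_rfl (fun y hy => hy.1) (fun _ _ _ _ _ hx' => hx')
      ?_ ?_ k ⟨huD, (hχ' D₁ u).2 hu⟩ ⟨⟨hvD, hχv⟩, Iff.rfl⟩⟩
    · rintro c y y' ⟨hyE, hy⟩ hyy' hy'E
      refine ⟨hy'E, (hM.level_eq_zero_iff_of_rel ?_ hyE hy'E hyy').symm.trans hy⟩
      exact fun w hwE hw hupE => hfull ⟨w, hw, hwE, hupE⟩
    · rintro x ⟨-, hx⟩ y ⟨-, hy⟩
      exact hM.mem_val_iff_of_level_eq_zero_iff (((hχ' D₁ x).1 hx).trans hy.symm)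

end IsDoubleChain

theorem double_chain_nbisim_agreement_general
    (A P : Type) (a b : A) (htwo : ∀ c : A, c = a ∨ c = b) (p : P)
    (rel : A → (ℕ ⊕ ℕ) → (ℕ ⊕ ℕ) → Prop) (hequiv : ∀ c, Equivalence (rel c))
    (hrela : ∀ s t : ℕ ⊕ ℕ, rel a s t ↔ (s = t ∨ ∃ i : ℕ,
      (s = Sum.inl (2*i) ∧ t = Sum.inl (2*i+1)) ∨
      (t = Sum.inl (2*i) ∧ s = Sum.inl (2*i+1)) ∨
      (s = Sum.inr (2*i) ∧ t = Sum.inr (2*i+1)) ∨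
      (t = Sum.inr (2*i) ∧ s = Sum.inr (2*i+1))))
    (hrelb : ∀ s t : ℕ ⊕ ℕ, rel b s t ↔ (s = t ∨
      (s = Sum.inl 0 ∧ t = Sum.inr 0) ∨ (t = Sum.inl 0 ∧ s = Sum.inr 0) ∨
      ∃ i : ℕ,
      (s = Sum.inl (2*i+1) ∧ t = Sum.inl (2*i+2)) ∨
      (t = Sum.inl (2*i+1) ∧ s = Sum.inl (2*i+2)) ∨
      (s = Sum.inr (2*i+1) ∧ t = Sum.inr (2*i+2)) ∨
      (t = Sum.inr (2*i+1) ∧ s = Sum.inr (2*i+2))))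
    (V : P → Set (ℕ ⊕ ℕ))
    (hVp : V p = {Sum.inl 0, Sum.inr 0})
    (hVq : ∀ q : P, q ≠ p → V q = ∅)
    (D₁ D₂ : Set (ℕ ⊕ ℕ)) (h₁ : D₁.Nonempty) (h₂ : D₂.Nonempty)
    (s : ((doubleChainModel A P rel hequiv V).restrict D₁ h₁).S)
    (t : ((doubleChainModel A P rel hequiv V).restrict D₂ h₂).S)
    (k : ℕ)
    (hbis : ∃ R, IsNBisim ((doubleChainModel A P rel hequiv V).restrict D₁ h₁)
        ((doubleChainModel A P rel hequiv V).restrict D₂ h₂) k R ∧ R s t)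
    (φ : Form A P) (hd : Form.depth φ ≤ k) :
    Sat ((doubleChainModel A P rel hequiv V).restrict D₁ h₁) s φ ↔
      Sat ((doubleChainModel A P rel hequiv V).restrict D₂ h₂) t φ := by
  obtain ⟨R, hR, hst⟩ := hbis
  have hM : IsDoubleChain rel V p := IsDoubleChain.of_rel_iff htwo hrela hrelb hVp hVq
  calc Sat _ s φ ↔ φ.sat _ D₁ s.1 := sat_restrict_iff φ s
    _ ↔ φ.sat _ D₂ t.1 := φ.sat_iff_of_bisim hM.posAnnMatching (bisim_of_isNBisim hR hst) hd
    _ ↔ Sat _ t φ := (sat_restrict_iff φ t).symm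

/-- Let `M^ω` be the two-agent model on ℕ ⊎ ℕ' where `∼_a`
is the reflexive-symmetric closure of `{(2i, 2i+1)} ∪ {(2i', (2i+1)')}`,
`∼_b` is the reflexive-symmetric closure of
`{(2i+1, 2i+2)} ∪ {((2i+1)', (2i+2)')} ∪ {(0, 0')}`, and `V(p) = {0, 0'}`
(all other atoms being false everywhere). Then for all restrictions `M`, `N`
of `M^ω`, states `s` of `M` and `t` of `N`, and `k ∈ ℕ`: if `M_s` and `N_t`
are `k`-bisimilar, then they agree on every L_PAPAL formula of epistemic
depth at most `k`. -/
theorem double_chain_nbisim_agreement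
    (A P : Type) (a b : A) (hab : a ≠ b) (htwo : ∀ c : A, c = a ∨ c = b) (p : P)
    (rel : A → (ℕ ⊕ ℕ) → (ℕ ⊕ ℕ) → Prop) (hequiv : ∀ c, Equivalence (rel c))
    (hrela : ∀ s t : ℕ ⊕ ℕ, rel a s t ↔ (s = t ∨ ∃ i : ℕ,
      (s = Sum.inl (2*i) ∧ t = Sum.inl (2*i+1)) ∨
      (t = Sum.inl (2*i) ∧ s = Sum.inl (2*i+1)) ∨
      (s = Sum.inr (2*i) ∧ t = Sum.inr (2*i+1)) ∨
      (t = Sum.inr (2*i) ∧ s = Sum.inr (2*i+1))))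
    (hrelb : ∀ s t : ℕ ⊕ ℕ, rel b s t ↔ (s = t ∨
      (s = Sum.inl 0 ∧ t = Sum.inr 0) ∨ (t = Sum.inl 0 ∧ s = Sum.inr 0) ∨
      ∃ i : ℕ,
      (s = Sum.inl (2*i+1) ∧ t = Sum.inl (2*i+2)) ∨
      (t = Sum.inl (2*i+1) ∧ s = Sum.inl (2*i+2)) ∨
      (s = Sum.inr (2*i+1) ∧ t = Sum.inr (2*i+2)) ∨
      (t = Sum.inr (2*i+1) ∧ s = Sum.inr (2*i+2))))
    (V : P → Set (ℕ ⊕ ℕ))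
    (hVp : V p = {Sum.inl 0, Sum.inr 0})
    (hVq : ∀ q : P, q ≠ p → V q = ∅)
    (D₁ D₂ : Set (ℕ ⊕ ℕ)) (h₁ : D₁.Nonempty) (h₂ : D₂.Nonempty)
    (s : ((doubleChainModel A P rel hequiv V).restrict D₁ h₁).S)
    (t : ((doubleChainModel A P rel hequiv V).restrict D₂ h₂).S)
    (k : ℕ)
    (hbis : ∃ R, IsNBisim ((doubleChainModel A P rel hequiv V).restrict D₁ h₁)
        ((doubleChainModel A P rel hequiv V).restrict D₂ h₂) k R ∧ R s t)
    (φ : Form A P) (hd : Form.depth φ ≤ k) :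
    Sat ((doubleChainModel A P rel hequiv V).restrict D₁ h₁) s φ ↔
      Sat ((doubleChainModel A P rel hequiv V).restrict D₂ h₂) t φ :=
  double_chain_nbisim_agreement_general A P a b htwo p rel hequiv hrela hrelb V hVp hVq D₁ D₂ h₁ h₂
    s t k hbis φ hd
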